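/- Let D ≥ 1, n ≥ 3, and let T : (Fin n → Fin D × Fin D) → ℝ be a pair tensor with within-pair symmetry, slot-exchange symmetry, and satisfying the cyclic identity. Then for any three pairwise distinct slots k, l, m, any a, b, c, d ∈ Fin D, and any fixed assignment of the remaining slots: the component of T with slots k, l, m set to (a,b), (a,c), (a,d) equals −(1/2) times the component of T with slots k, l, m set to (a,a), (a,d), (b,c) (remaining slots unchanged). -/

import Mathlib

/-- A pair tensor has within-pair symmetry if its value is unchanged when the
two entries of any single pair-slot are swapped. -/
def WithinPairSymm {n D : ℕ} (T : (Fin n → Fin D × Fin D) → ℝ) : Prop :=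
  ∀ (P : Fin n → Fin D × Fin D) (k : Fin n),
    T (Function.update P k ((P k).2, (P k).1)) = T P

/-- A pair tensor has slot-exchange symmetry if its value is unchanged under
precomposition with any permutation of the slots. -/
def SlotExchangeSymm {n D : ℕ} (T : (Fin n → Fin D × Fin D) → ℝ) : Prop :=
  ∀ (P : Fin n → Fin D × Fin D) (σ : Equiv.Perm (Fin n)), T (P ∘ σ) = T P

/-- A pair tensor satisfies the cyclic identity if for any two distinct slots,
any fixed assignment of the remaining slots, and any indices `a b c d`, the
cyclic sum of its components vanishes. -/
def CyclicIdentity {n D : ℕ} (T : (Fin n → Fin D × Fin D) → ℝ) : Prop :=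
  ∀ (P : Fin n → Fin D × Fin D) (k l : Fin n), k ≠ l →
    ∀ a b c d : Fin D,
      T (Function.update (Function.update P k (a, b)) l (c, d)) +
      T (Function.update (Function.update P k (a, c)) l (d, b)) +
      T (Function.update (Function.update P k (a, d)) l (b, c)) = 0

/-! Apply the cyclic identity to slots `k, l` carrying `(a,b), (a,c)`, with slot `m` held at
`(a,d)`. Its third term `(a,c | b,a)` in slots `k, l` is the first one up to the two
symmetries, and its second term `(a,a | c,b)` is, after exchanging slots `l` and `m`, the
right-hand side. Hence twice the left-hand side plus the right-hand side vanishes. -/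

open Function

theorem update_update_comp_swap {α β : Type*} [DecidableEq α] {k l : α} (hkl : k ≠ l)
    (Y : α → β) (p q : β) :
    update (update Y k p) l q ∘ Equiv.swap k l = update (update Y l p) k q := by
  ext i
  rcases eq_or_ne i k with rfl | hik
  · simp
  rcases eq_or_ne i l with rfl | hil
  · simp [update_of_ne hkl, hik]
  simp [Equiv.swap_apply_of_ne_of_ne hik hil, hik, hil]

section

variable {n D : ℕ} {T : (Fin n → Fin D × Fin D) → ℝ}

theorem WithinPairSymm.apply_update_swap (hwp : WithinPairSymm T) (X : Fin n → Fin D × Fin D)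
    (k : Fin n) (x y : Fin D) : T (update X k (x, y)) = T (update X k (y, x)) := by
  simpa using (hwp (update X k (x, y)) k).symm

theorem SlotExchangeSymm.apply_update_update_swap (hse : SlotExchangeSymm T) {k l : Fin n}
    (hkl : k ≠ l) (Y : Fin n → Fin D × Fin D) (p q : Fin D × Fin D) :
    T (update (update Y k p) l q) = T (update (update Y l p) k q) := by
  rw [← update_update_comp_swap hkl, hse]

end

theorem stmt_4_general (D n : ℕ)
    (T : (Fin n → Fin D × Fin D) → ℝ)
    (hwp : WithinPairSymm T) (hse : SlotExchangeSymm T)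
    (hcyc : CyclicIdentity T) :
    ∀ (P : Fin n → Fin D × Fin D) (k l m : Fin n),
      k ≠ l → k ≠ m → l ≠ m → ∀ a b c d : Fin D,
      T (Function.update (Function.update (Function.update P k (a, b)) l (a, c)) m (a, d)) =
      -(1 / 2 : ℝ) *
        T (Function.update (Function.update (Function.update P k (a, a)) l (a, d)) m (b, c)) := by
  intro P k l m hkl hkm hlm a b c d
  have hcyc_m := hcyc (update P m (a, d)) k l hkl a b a c
  have hfirst : update (update (update P m (a, d)) k (a, b)) l (a, c) =
      update (update (update P k (a, b)) l (a, c)) m (a, d) := by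
    rw [update_comm hkm.symm, update_comm hlm.symm]
  have hthird : T (update (update (update P m (a, d)) k (a, c)) l (b, a)) =
      T (update (update (update P m (a, d)) k (a, b)) l (a, c)) := by
    rw [hwp.apply_update_swap, hse.apply_update_update_swap hkl, update_comm hkl.symm]
  have hsecond : T (update (update (update P m (a, d)) k (a, a)) l (c, b)) =
      T (update (update (update P k (a, a)) l (a, d)) m (b, c)) := by
    rw [hwp.apply_update_swap, update_comm hkm.symm,
      hse.apply_update_update_swap hlm.symm]
  rw [hthird, hsecond, hfirst] at hcyc_m
  linarith

theorem stmt_4 (D n : ℕ) (hD : 1 ≤ D) (hn : 3 ≤ n)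
    (T : (Fin n → Fin D × Fin D) → ℝ)
    (hwp : WithinPairSymm T) (hse : SlotExchangeSymm T)
    (hcyc : CyclicIdentity T) :
    ∀ (P : Fin n → Fin D × Fin D) (k l m : Fin n),
      k ≠ l → k ≠ m → l ≠ m → ∀ a b c d : Fin D,
      T (Function.update (Function.update (Function.update P k (a, b)) l (a, c)) m (a, d)) =
      -(1 / 2 : ℝ) *
        T (Function.update (Function.update (Function.update P k (a, a)) l (a, d)) m (b, c)) :=
  stmt_4_general D n T hwp hse hcyc
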